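/- Let d ≥ 1 and let L, h be integers with ⌊L/2⌋ ≤ h ≤ L. Let c be an edge coloring of a complete d-ary tree with h levels such that any two distinct edges at distance at most L receive distinct colors. Then every color is assigned to at most d^{h−⌊L/2⌋} edges of depth h. -/
import Mathlib


/-- An edge of the complete `d`-ary tree with `h` levels: a nonempty sequence over `Fin d`
of length at most `h`, indexing the vertex that the edge joins to its parent. The depth of
an edge is the length of its sequence. -/
def TreeEdge (d h : ℕ) : Type := {s : List (Fin d) // s ≠ [] ∧ s.length ≤ h}

/-- The length of the longest common prefix of two lists. -/
def lcpLen {α : Type*} [DecidableEq α] : List α → List α → ℕ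
  | a :: s, b :: t => if a = b then lcpLen s t + 1 else 0
  | _, _ => 0

/-- The distance between two edges `s, t` of the tree: the number of vertices on a shortest
path between them. If one of `s, t` is a prefix of the other it is `| |s| − |t| |`, and
otherwise it is `|s| + |t| − 2a − 1` where `a` is the length of the longest common prefix
of `s` and `t` (so incident edges have distance 1). -/
def edgeDist {α : Type*} [DecidableEq α] (s t : List α) : ℕ :=
  if s <+: t ∨ t <+: s then Nat.dist s.length t.length
  else s.length + t.length - 2 * lcpLen s t - 1

lemma lcpLen_ge {α : Type*} [DecidableEq α] :
    ∀ (k : ℕ) (s t : List α), s.take k = t.take k → k ≤ s.length → k ≤ t.length →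
      k ≤ lcpLen s t
  | 0, _, _, _, _, _ => Nat.zero_le _
  | k + 1, a :: s, b :: t, htake, hs, ht => by
      simp only [List.take_succ_cons, List.cons.injEq] at htake
      obtain ⟨rfl, htake⟩ := htake
      simp only [lcpLen, if_pos rfl]
      exact Nat.succ_le_succ (lcpLen_ge k s t htake (by simpa using hs) (by simpa using ht))

/-- let `d ≥ 1` and `⌊L/2⌋ ≤ h ≤ L` with `h ≥ 1`, and let `c` be an edge
coloring of a complete `d`-ary tree with `h` levels such that any two distinct edges at
distance at most `L` receive distinct colors. Then every color is assigned to at most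
`d^(h−⌊L/2⌋)` edges of depth `h`. -/
theorem stmt_7 (d h L : ℕ) (hd : 1 ≤ d) (hh : 1 ≤ h) (hLh : L / 2 ≤ h) (hhL : h ≤ L)
    {C : Type*} (c : TreeEdge d h → C)
    (hc : ∀ e f : TreeEdge d h, e ≠ f → edgeDist e.1 f.1 ≤ L → c e ≠ c f)
    (x : C) :
    Nat.card {e : TreeEdge d h // e.1.length = h ∧ c e = x} ≤ d ^ (h - L / 2) := by
  set k := h - L / 2 with hk
  have hkh : k ≤ h := Nat.sub_le _ _
  -- map to the prefix of length k
  let F : {e : TreeEdge d h // e.1.length = h ∧ c e = x} → List.Vector (Fin d) k :=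
    fun e => ⟨e.1.1.take k, by rw [List.length_take]; have := e.2.1; omega⟩
  have hF : Function.Injective F := by
    rintro ⟨e, he, hce⟩ ⟨f, hf, hcf⟩ hEq
    have htake : e.1.take k = f.1.take k := by
      have := congrArg Subtype.val hEq
      simpa [F] using this
    by_contra hne
    have hef : e ≠ f := fun h' => hne (by simp [Subtype.ext_iff, h'])
    have hval : e.1 ≠ f.1 := fun h' => hef (Subtype.ext h')
    have hlcp : k ≤ lcpLen e.1 f.1 := lcpLen_ge k _ _ htake (by omega) (by omega)
    have hnp : ¬(e.1 <+: f.1 ∨ f.1 <+: e.1) := by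
      rintro (hp | hp)
      · exact hval (hp.eq_of_length (he.trans hf.symm))
      · exact hval (hp.eq_of_length (hf.trans he.symm)).symm
    have hd2 : edgeDist e.1 f.1 ≤ L := by
      rw [edgeDist, if_neg hnp, he, hf]
      omega
    exact hc e f hef hd2 (hce.trans hcf.symm)
  calc Nat.card {e : TreeEdge d h // e.1.length = h ∧ c e = x}
      ≤ Nat.card (List.Vector (Fin d) k) := Nat.card_le_card_of_injective F hF
    _ = d ^ k := by simp [Nat.card_eq_fintype_card, card_vector]
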